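/- Let G := Γ^k be the Hahn group over a linearly ordered set Γ with exponents in k, σ : Γ → Γ a decreasing order-preserving embedding, l_σ the induced prelogarithmic section of k((G)), ψ_σ(∏_γ x_γ^{g(γ)}) := ∏_γ x_{σ(γ)}^{g(γ)} the induced morphism, and G^# the exponential extension group of (k((G)),l_σ) with embedding ι. Define ψ_σ^# : G^# → G^# by ψ_σ^#(e(α)) := e(ψ_σ(α)), where ψ_σ also denotes the canonical extension of ψ_σ to k((G)) (which maps k((G^{>1})) into itself). Then for every g ∈ G there exists g^# ∈ G^# with ψ_σ^#(g^#) = ι(g); namely g^# = e(Σ_γ g(γ)·x_γ). In particular ι(G) ⊆ ψ_σ^#(G^#). -/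

import Mathlib

/-! Common framework: fields of generalized power series `k((G))` over a multiplicative
linearly ordered abelian group `G`, realized as Mathlib Hahn series over the additive
order-dual of `G` (so that anti well-ordered supports in `G` become partially
well-ordered supports), with the anti-lexicographic order. -/

noncomputable section
open HahnSeries
open scoped Classical

/-- The additive order-dual copy of the multiplicative group `G`:
anti well-ordered subsets of `G` correspond to well-ordered subsets of `gdual G`. -/
abbrev gdual (G : Type*) [CommGroup G] [LinearOrder G] [IsOrderedMonoid G] : Type _ := Additive Gᵒᵈ

/-- View an element of `G` as an exponent (element of `gdual G`). -/
def toGd {G : Type*} [CommGroup G] [LinearOrder G] [IsOrderedMonoid G] (g : G) : gdual G :=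
  Additive.ofMul (OrderDual.toDual g)

/-- View an exponent (element of `gdual G`) as an element of `G`. -/
def toG {G : Type*} [CommGroup G] [LinearOrder G] [IsOrderedMonoid G] (γ : gdual G) : G :=
  OrderDual.ofDual (Additive.toMul γ)

section HahnOrder

variable {k : Type*} [Field k] [LinearOrder k] [IsStrictOrderedRing k] {Γ' : Type*} [LinearOrder Γ']

theorem hahn_leadingCoeff_of_ne {x : HahnSeries Γ' k} (hx : x ≠ 0) :
    x.leadingCoeff = x.coeff (x.isWF_support.min (HahnSeries.support_nonempty_iff.2 hx)) := by
  rw [← HahnSeries.coeff_untop_eq_leadingCoeff (HahnSeries.orderTop_ne_top.2 hx)]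
  congr 1
  rw [WithTop.untop_eq_iff]
  exact HahnSeries.orderTop_of_ne_zero hx

theorem hahn_leadingCoeff_neg (x : HahnSeries Γ' k) : (-x).leadingCoeff = -x.leadingCoeff := by
  by_cases h : x = 0
  · simp [h]
  · have hn : (-x) ≠ 0 := neg_ne_zero.2 h
    rw [hahn_leadingCoeff_of_ne h, hahn_leadingCoeff_of_ne hn]
    have hmin : (-x).isWF_support.min (HahnSeries.support_nonempty_iff.2 hn)
        = x.isWF_support.min (HahnSeries.support_nonempty_iff.2 h) := by
      apply le_antisymm
      · exact Set.IsWF.min_le _ _ (by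
          rw [HahnSeries.support_neg (x := x)]
          exact x.isWF_support.min_mem (HahnSeries.support_nonempty_iff.2 h))
      · refine Set.IsWF.min_le _ _ ?_
        rw [← HahnSeries.support_neg (x := x)]
        exact (-x).isWF_support.min_mem (HahnSeries.support_nonempty_iff.2 hn)
    rw [hmin, HahnSeries.coeff_neg]

theorem hahn_leadingCoeff_add_pos {a b : HahnSeries Γ' k}
    (ha : 0 < a.leadingCoeff) (hb : 0 < b.leadingCoeff) : 0 < (a + b).leadingCoeff := by
  have key : ∀ x y : HahnSeries Γ' k, 0 < x.leadingCoeff → 0 < y.leadingCoeff →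
      ∀ (hx0 : x ≠ 0) (hy0 : y ≠ 0),
      x.isWF_support.min (HahnSeries.support_nonempty_iff.2 hx0) ≤
        y.isWF_support.min (HahnSeries.support_nonempty_iff.2 hy0) →
      0 < (x + y).leadingCoeff := by
    intro x y hx hy hx0 hy0 hle
    set mx := x.isWF_support.min (HahnSeries.support_nonempty_iff.2 hx0) with hmx
    set my := y.isWF_support.min (HahnSeries.support_nonempty_iff.2 hy0) with hmy
    have hcx : x.coeff mx = x.leadingCoeff := (hahn_leadingCoeff_of_ne hx0).symm
    have hcoeff : 0 < (x + y).coeff mx := by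
      rcases lt_or_eq_of_le hle with hlt | heq
      · have hny : y.coeff mx = 0 := by
          by_contra hc
          exact absurd (Set.IsWF.min_le _ _ (by rwa [HahnSeries.mem_support])) (not_le.2 hlt)
        rw [HahnSeries.coeff_add, hny, add_zero, hcx]; exact hx
      · have hcy : y.coeff mx = y.leadingCoeff := by
          rw [heq]; exact (hahn_leadingCoeff_of_ne hy0).symm
        rw [HahnSeries.coeff_add, hcx, hcy]; exact add_pos hx hy
    have hmem : mx ∈ (x + y).support := by
      rw [HahnSeries.mem_support]; exact ne_of_gt hcoeff
    have hxy0 : x + y ≠ 0 := HahnSeries.support_nonempty_iff.1 ⟨mx, hmem⟩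
    have hminxy : (x + y).isWF_support.min (HahnSeries.support_nonempty_iff.2 hxy0) = mx := by
      apply le_antisymm (Set.IsWF.min_le _ _ hmem)
      have hmm := (x + y).isWF_support.min_mem (HahnSeries.support_nonempty_iff.2 hxy0)
      rcases HahnSeries.support_add_subset _ _ hmm with hmem' | hmem'
      · exact Set.IsWF.min_le _ _ hmem'
      · exact le_trans hle (Set.IsWF.min_le _ _ hmem')
    rw [hahn_leadingCoeff_of_ne hxy0, hminxy]
    exact hcoeff
  have ha0 : a ≠ 0 := by intro h; rw [h] at ha; simp at ha
  have hb0 : b ≠ 0 := by intro h; rw [h] at hb; simp at hb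
  rcases le_total (a.isWF_support.min (HahnSeries.support_nonempty_iff.2 ha0))
      (b.isWF_support.min (HahnSeries.support_nonempty_iff.2 hb0)) with hle | hle
  · exact key a b ha hb ha0 hb0 hle
  · rw [add_comm]; exact key b a hb ha hb0 ha0 hle

/-- The anti-lexicographic linear order on generalized power series:
`x` is positive iff its leading coefficient (the coefficient at the valuation `v x`,
i.e. at the largest element of the support) is positive. -/
instance instHahnLinearOrder : LinearOrder (HahnSeries Γ' k) where
  le x y := x = y ∨ 0 < (y - x).leadingCoeff
  lt x y := 0 < (y - x).leadingCoeff
  le_refl x := Or.inl rfl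
  le_trans x y z hxy hyz := by
    rcases hxy with rfl | hxy
    · exact hyz
    rcases hyz with rfl | hyz
    · exact Or.inr hxy
    · refine Or.inr ?_
      have := hahn_leadingCoeff_add_pos hyz hxy
      rwa [sub_add_sub_cancel] at this
  le_antisymm x y hxy hyx := by
    rcases hxy with rfl | hxy
    · rfl
    rcases hyx with rfl | hyx
    · rfl
    · exfalso
      have h1 : (x - y).leadingCoeff = -(y - x).leadingCoeff := by
        rw [← hahn_leadingCoeff_neg, neg_sub]
      rw [h1] at hyx
      exact absurd hxy (not_lt.2 (le_of_lt (neg_pos.1 hyx)))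
  lt_iff_le_not_ge x y := by
    constructor
    · intro h
      refine ⟨Or.inr h, ?_⟩
      rintro (rfl | h')
      · change 0 < (y - y).leadingCoeff at h
        rw [sub_self] at h
        simp at h
      · have h1 : (x - y).leadingCoeff = -(y - x).leadingCoeff := by
          rw [← hahn_leadingCoeff_neg, neg_sub]
        rw [h1] at h'
        exact absurd h (not_lt.2 (le_of_lt (neg_pos.1 h')))
    · rintro ⟨hle, hnot⟩
      rcases hle with rfl | h
      · exact absurd (Or.inl rfl) hnot
      · exact h
  le_total x y := by
    by_cases h : x = y
    · exact Or.inl (Or.inl h)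
    · have h0 : y - x ≠ 0 := sub_ne_zero.2 (Ne.symm h)
      have hlc : (y - x).leadingCoeff ≠ 0 := HahnSeries.leadingCoeff_ne_zero.2 h0
      rcases lt_or_gt_of_ne hlc with hneg | hpos
      · refine Or.inr (Or.inr ?_)
        rw [show x - y = -(y - x) from (neg_sub y x).symm, hahn_leadingCoeff_neg]
        exact neg_pos.2 hneg
      · exact Or.inl (Or.inr hpos)
  toDecidableLE := fun _ _ => Classical.dec _

/-- With the anti-lexicographic order, `k((G))` is a linearly ordered abelian group. -/
instance instHahnLOACG : IsOrderedAddMonoid (HahnSeries Γ' k) where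
  add_le_add_left := by
    intro x y hxy c
    rcases hxy with rfl | h
    · exact le_refl _
    · exact Or.inr (by rwa [add_sub_add_right_eq_sub])

theorem hahn_lt_iff (x y : HahnSeries Γ' k) : x < y ↔ 0 < (y - x).leadingCoeff := Iff.rfl

theorem hahn_single_pos (a : Γ') : (0 : HahnSeries Γ' k) < HahnSeries.single a 1 := by
  rw [hahn_lt_iff, sub_zero, HahnSeries.leadingCoeff_of_single]
  exact one_pos

theorem hahn_single_lt_single {a b : Γ'} (hab : b < a) :
    (HahnSeries.single a 1 : HahnSeries Γ' k) < HahnSeries.single b 1 := by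
  rw [hahn_lt_iff]
  set δ : HahnSeries Γ' k := HahnSeries.single b 1 - HahnSeries.single a 1 with hδdef
  have hne : b ≠ a := ne_of_lt hab
  have hb : δ.coeff b = 1 := by
    rw [hδdef, HahnSeries.coeff_sub, HahnSeries.coeff_single_same,
      HahnSeries.coeff_single_of_ne hne, sub_zero]
  have hbmem : b ∈ δ.support := by rw [HahnSeries.mem_support, hb]; exact one_ne_zero
  have hδ : δ ≠ 0 := HahnSeries.support_nonempty_iff.1 ⟨b, hbmem⟩
  have hsub : δ.support ⊆ {b, a} := by
    intro γ hγ
    rw [HahnSeries.mem_support] at hγ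
    by_contra hγ'
    simp only [Set.mem_insert_iff, Set.mem_singleton_iff, not_or] at hγ'
    apply hγ
    rw [hδdef, HahnSeries.coeff_sub, HahnSeries.coeff_single_of_ne hγ'.1,
      HahnSeries.coeff_single_of_ne hγ'.2, sub_zero]
  have hmin : δ.isWF_support.min (HahnSeries.support_nonempty_iff.2 hδ) = b := by
    have hmem := δ.isWF_support.min_mem (HahnSeries.support_nonempty_iff.2 hδ)
    have hle := δ.isWF_support.min_le (HahnSeries.support_nonempty_iff.2 hδ) hbmem
    rcases hsub hmem with h | h
    · exact h
    · exact absurd (h ▸ hle) (not_le.2 hab)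
  rw [hahn_leadingCoeff_of_ne hδ, hmin, hb]
  exact one_pos

end HahnOrder

section Series

variable {k : Type*} [Field k] [LinearOrder k] [IsStrictOrderedRing k] {G : Type*} [CommGroup G] [LinearOrder G] [IsOrderedMonoid G]

/-- The summable family `n ↦ (-1)^n/(n+1) • ε^(n+1)` (`ε` of positive order). -/
def logFamily (ε : HahnSeries (gdual G) k) (hε : 0 < ε.orderTop) :
    HahnSeries.SummableFamily (gdual G) k ℕ where
  toFun n := ((-1 : k) ^ n / ((n : k) + 1)) • ε ^ (n + 1)
  isPWO_iUnion_support' := by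
    refine ((HahnSeries.SummableFamily.powers ε).isPWO_iUnion_support).mono ?_
    intro γ hγ
    rw [Set.mem_iUnion] at hγ ⊢
    obtain ⟨n, hn⟩ := hγ
    refine ⟨n + 1, ?_⟩
    rw [HahnSeries.mem_support] at hn ⊢
    intro h
    apply hn
    show (((-1 : k) ^ n / ((n : k) + 1)) • ε ^ (n + 1)).coeff γ = 0
    rw [HahnSeries.coeff_smul]
    show ((-1 : k) ^ n / ((n : k) + 1)) • (ε ^ (n + 1)).coeff γ = 0
    rw [show (ε ^ (n + 1)).coeff γ = 0 by
        rw [← HahnSeries.SummableFamily.powers_of_orderTop_pos hε]; exact h, smul_zero]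
  finite_co_support' g := by
    have h := (HahnSeries.SummableFamily.powers ε).finite_co_support g
    refine Set.Finite.subset (h.preimage (Set.injOn_of_injective Nat.succ_injective)) ?_
    intro n hn
    simp only [Set.mem_preimage, Set.mem_setOf_eq] at hn ⊢
    intro h0
    apply hn
    show (((-1 : k) ^ n / ((n : k) + 1)) • ε ^ (n + 1)).coeff g = 0
    rw [HahnSeries.coeff_smul]
    have : ((HahnSeries.SummableFamily.powers ε) (Nat.succ n)).coeff g = 0 := h0
    rw [show (ε ^ (n + 1)).coeff g = 0 by
        rw [← HahnSeries.SummableFamily.powers_of_orderTop_pos hε]; exact this, smul_zero]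

/-- The logarithm on 1-units: `1 + ε ↦ Σ_{i ≥ 1} (-1)^(i-1) ε^i / i`
(for `ε` supported on `G^{<1}`; junk value `0` otherwise). -/
def logOneUnit (ε : HahnSeries (gdual G) k) : HahnSeries (gdual G) k :=
  if hε : 0 < ε.orderTop then (logFamily ε hε).hsum else 0

/-- The canonical extension of an order-preserving embedding `ψ : G₁ → G₂` to the fields of
generalized power series, applying `ψ` to every monomial (junk value `0` if `ψ` is not
order-preserving). -/
def extMap {k : Type*} [Field k] [LinearOrder k] [IsStrictOrderedRing k] {G₁ G₂ : Type*} [CommGroup G₁] [LinearOrder G₁] [IsOrderedMonoid G₁]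
    [CommGroup G₂] [LinearOrder G₂] [IsOrderedMonoid G₂] (ψ : G₁ → G₂) :
    HahnSeries (gdual G₁) k → HahnSeries (gdual G₂) k :=
  if h : StrictMono ψ then
    HahnSeries.embDomain
      (OrderEmbedding.ofStrictMono (fun γ => toGd (ψ (toG γ)))
        (fun a b hab => show toGd (ψ (toG a)) < toGd (ψ (toG b)) from
          h (show toG b < toG a from hab)))
  else fun _ => 0

/-- The additive subgroup `k((G^{>1}))` of the series supported on `G^{>1}`. -/
def largeSeries (k : Type*) [Field k] [LinearOrder k] [IsStrictOrderedRing k] (G : Type*) [CommGroup G] [LinearOrder G] [IsOrderedMonoid G] :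
    AddSubgroup (HahnSeries (gdual G) k) where
  carrier := {f | ∀ γ ∈ f.support, γ < (0 : gdual G)}
  zero_mem' := by intro γ hγ; rw [HahnSeries.support_zero] at hγ; exact absurd hγ (Set.notMem_empty γ)
  add_mem' := by
    intro a b ha hb γ hγ
    rcases HahnSeries.support_add_subset _ _ hγ with h | h
    exacts [ha γ h, hb γ h]
  neg_mem' := by
    intro a ha γ hγ
    rw [HahnSeries.support_neg] at hγ
    exact ha γ hγ

theorem mem_largeSeries {f : HahnSeries (gdual G) k} :
    f ∈ largeSeries k G ↔ ∀ γ ∈ f.support, γ < (0 : gdual G) := Iff.rfl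

/-- `log : (k^{>0}, ·) → (k, +)` is an order-preserving group embedding. -/
structure IsResidueLog (lg : k → k) : Prop where
  map_mul : ∀ a b : k, 0 < a → 0 < b → lg (a * b) = lg a + lg b
  strictMonoOn : StrictMonoOn lg (Set.Ioi 0)

/-- A prelogarithmic section of `k((G))`: an order-preserving group embedding
`l : (G, ·) → (k((G^{>1})), +)`. -/
structure IsPrelogSection (l : G → HahnSeries (gdual G) k) : Prop where
  supp_large : ∀ g : G, l g ∈ largeSeries k G
  map_mul : ∀ g h : G, l (g * h) = l g + l h
  strictMono : StrictMono l

/-- The prelogarithm associated to a prelogarithmic section `l` and a logarithm `lg` on the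
residue field: `L(g·a·(1+ε)) = l(g) + log(a) + Σ (-1)^(i-1) ε^i/i`. -/
def prelogL (lg : k → k) (l : G → HahnSeries (gdual G) k)
    (α : HahnSeries (gdual G) k) : HahnSeries (gdual G) k :=
  l (toG α.order) + HahnSeries.C (lg α.leadingCoeff) +
    logOneUnit ((HahnSeries.single α.order α.leadingCoeff)⁻¹ * α - 1)

/-- The group of exponentials `G^# = e[k((G^{>1}))]`, a multiplicative copy of the ordered
additive group `k((G^{>1}))`. The element `e(α)` is `Multiplicative.ofAdd ⟨α, _⟩`. -/
abbrev Gsharp (k : Type*) [Field k] [LinearOrder k] [IsStrictOrderedRing k] (G : Type*) [CommGroup G] [LinearOrder G] [IsOrderedMonoid G] :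
    Type _ := Multiplicative ↥(largeSeries k G)

/-- The embedding `ι : G → G^#`, `ι(g) := e(l(g))`. -/
def iotaSharp (l : G → HahnSeries (gdual G) k) (hl : ∀ g, l g ∈ largeSeries k G) (g : G) :
    Gsharp k G :=
  Multiplicative.ofAdd (⟨l g, hl g⟩ : ↥(largeSeries k G))

/-- The prelogarithmic section `l^#` of `k((G^#))`: `l^#(e(α)) := ι(α)`, where
`ι : k((G)) → k((G^#))` is the canonical extension of `ι : G → G^#`. -/
def lsharpFun (l : G → HahnSeries (gdual G) k) (hl : ∀ g, l g ∈ largeSeries k G)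
    (x : Gsharp k G) : HahnSeries (gdual (Gsharp k G)) k :=
  extMap (iotaSharp l hl) ((Multiplicative.toAdd x : ↥(largeSeries k G)) : HahnSeries (gdual G) k)

/-- The induced map `ψ^# : G₁^# → G₂^#`, `ψ^#(e(α)) := e(ψ(α))` (junk value `1` if the
canonical extension of `ψ` does not map `k((G₁^{>1}))` into `k((G₂^{>1}))`). -/
def psiSharp {k : Type*} [Field k] [LinearOrder k] [IsStrictOrderedRing k] {G₁ G₂ : Type*} [CommGroup G₁] [LinearOrder G₁] [IsOrderedMonoid G₁]
    [CommGroup G₂] [LinearOrder G₂] [IsOrderedMonoid G₂] (ψ : G₁ → G₂) (x : Gsharp k G₁) : Gsharp k G₂ :=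
  if h : ∀ f ∈ largeSeries k G₁, extMap ψ f ∈ largeSeries k G₂ then
    Multiplicative.ofAdd
      (⟨extMap ψ ((Multiplicative.toAdd x : ↥(largeSeries k G₁)) : HahnSeries (gdual G₁) k),
        h _ (Multiplicative.toAdd x).2⟩ : ↥(largeSeries k G₂))
  else 1

/-- Condition (†) for subgroups `U ⊆ H` of `G`:
`l(H) < |f|` for every nonzero `f ∈ k((H^{>U}))`. -/
def CondDagger (l : G → HahnSeries (gdual G) k) (U H : Subgroup G) : Prop :=
  ∀ h ∈ H, ∀ f : HahnSeries (gdual G) k, f ≠ 0 →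
    (∀ γ ∈ f.support, toG γ ∈ H ∧ ∀ u ∈ U, u < toG γ) → l h < |f|

/-- The growth axiom for a subgroup `H` of `G`:
`l(H) < |f|` for every nonzero `f ∈ k((H^{>1}))`. -/
def GrowthAxiom (l : G → HahnSeries (gdual G) k) (H : Subgroup G) : Prop :=
  CondDagger l (⊥ : Subgroup G) H

theorem mem_large_of_gt {f : HahnSeries (gdual G) k} {U H : Subgroup G}
    (hf : ∀ γ ∈ f.support, toG γ ∈ H ∧ ∀ u ∈ U, u < toG γ) : f ∈ largeSeries k G :=
  fun γ hγ => show (1 : G) < toG γ from (hf γ hγ).2 1 U.one_mem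

/-- The set `H^{#,U} = ι(H)·e[k((H^{>U}))] ⊆ G^#`. -/
def sharpProdSet (l : G → HahnSeries (gdual G) k) (hl : ∀ g, l g ∈ largeSeries k G)
    (U H : Subgroup G) : Set (Gsharp k G) :=
  {x | ∃ h ∈ H, ∃ f : HahnSeries (gdual G) k,
    ∃ hf : ∀ γ ∈ f.support, toG γ ∈ H ∧ ∀ u ∈ U, u < toG γ,
    x = iotaSharp l hl h *
      Multiplicative.ofAdd (⟨f, mem_large_of_gt hf⟩ : ↥(largeSeries k G))}

end Series

section Hahn

variable (k : Type*) [Field k] [LinearOrder k] [IsStrictOrderedRing k] {Γ : Type*} [LinearOrder Γ]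

/-- The Hahn group `Γ^k` of formal products `∏_γ x_γ^(g γ)` with anti well-ordered support,
ordered anti-lexicographically, realized as the multiplicative copy of the additive group of
Hahn series over `Γᵒᵈ` with coefficients in `k`. -/
abbrev HahnGroup (Γ : Type*) [LinearOrder Γ] (k : Type*) [Field k] [LinearOrder k] [IsStrictOrderedRing k] : Type _ :=
  Multiplicative (HahnSeries Γᵒᵈ k)

/-- The monomial `x_γ` in the Hahn group `Γ^k`. -/
def xMon (γ : Γ) : HahnGroup Γ k :=
  Multiplicative.ofAdd (HahnSeries.single (OrderDual.toDual γ) (1 : k))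

/-- The prelogarithmic section `l_σ` on `k((Γ^k))` induced by `σ : Γ → Γ`:
`l_σ(∏_γ x_γ^(g γ)) := Σ_γ (g γ)·x_(σ γ)` (junk value `0` if `σ` is not strictly
order-preserving). -/
def sigmaSection (σ : Γ → Γ) :
    HahnGroup Γ k → HahnSeries (gdual (HahnGroup Γ k)) k :=
  if hσ : StrictMono σ then fun g =>
    HahnSeries.embDomain
      (OrderEmbedding.ofStrictMono
        (fun γ : Γᵒᵈ => toGd (xMon k (σ (OrderDual.ofDual γ))))
        (fun a b hab =>
          show toGd (xMon k (σ (OrderDual.ofDual a))) < toGd (xMon k (σ (OrderDual.ofDual b)))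
          from hahn_single_lt_single
            (show OrderDual.toDual (σ (OrderDual.ofDual a)) <
                OrderDual.toDual (σ (OrderDual.ofDual b)) from
              hσ (show OrderDual.ofDual b < OrderDual.ofDual a from hab))))
      (Multiplicative.toAdd g)
  else fun _ => 0

/-- The lift `ψ_σ : Γ^k → Γ^k` of `σ : Γ → Γ`, `ψ_σ(∏_γ x_γ^(g γ)) := ∏_γ x_(σ γ)^(g γ)`
(junk value `id` if `σ` is not strictly order-preserving). -/
def sigmaAuto (σ : Γ → Γ) : HahnGroup Γ k → HahnGroup Γ k :=
  if hσ : StrictMono σ then fun g =>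
    Multiplicative.ofAdd
      (HahnSeries.embDomain
        (OrderEmbedding.ofStrictMono
          (fun γ : Γᵒᵈ => OrderDual.toDual (σ (OrderDual.ofDual γ)))
          (fun a b hab =>
            show OrderDual.toDual (σ (OrderDual.ofDual a)) <
                OrderDual.toDual (σ (OrderDual.ofDual b)) from
              hσ (show OrderDual.ofDual b < OrderDual.ofDual a from hab)))
        (Multiplicative.toAdd g))
  else id

end Hahn

/-! The identity `ψ_σ(l_id(g)) = l_σ(g)` is a composition of monomial embeddings: `l_id`
sends `x_γ^a` to `a·x_γ`, and `ψ_σ` then sends `x_γ` to `x_{σ γ}`. Since `ψ_σ` is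
order-preserving and fixes `1`, its extension preserves `k((G^{>1}))`, so `ψ_σ^#` is given
by the formula `e(α) ↦ e(ψ_σ(α))` rather than by its junk value, and `e(l_id(g))` is a
preimage of `ι(g) = e(l_σ(g))`. -/

namespace HahnSeries

theorem embDomain_embDomain {A B C R : Type*} [PartialOrder A] [PartialOrder B]
    [PartialOrder C] [Zero R] (e₁ : A ↪o B) (e₂ : B ↪o C) (x : HahnSeries A R) :
    embDomain e₂ (embDomain e₁ x) = embDomain (e₁.trans e₂) x := by
  ext c
  by_cases hc : c ∈ Set.range e₂
  · obtain ⟨b, rfl⟩ := hc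
    rw [embDomain_coeff]
    by_cases hb : b ∈ Set.range e₁
    · obtain ⟨a, rfl⟩ := hb
      rw [embDomain_coeff, show e₂ (e₁ a) = (e₁.trans e₂) a from rfl, embDomain_coeff]
    · rw [embDomain_of_notMem_range hb, embDomain_of_notMem_range]
      rintro ⟨a, ha⟩
      exact hb ⟨a, e₂.injective ha⟩
  · rw [embDomain_of_notMem_range hc, embDomain_of_notMem_range]
    rintro ⟨a, rfl⟩
    exact hc ⟨e₁ a, rfl⟩

theorem leadingCoeff_embDomain {A B R : Type*} [LinearOrder A] [LinearOrder B] [Zero R]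
    (e : A ↪o B) (x : HahnSeries A R) :
    (embDomain e x).leadingCoeff = x.leadingCoeff := by
  simp only [leadingCoeff, orderTop_embDomain]
  cases x.orderTop <;> simp [embDomain_coeff]

theorem embDomain_sub {A B R : Type*} [PartialOrder A] [PartialOrder B] [AddGroup R]
    (e : A ↪o B) (x y : HahnSeries A R) :
    embDomain e (x - y) = embDomain e x - embDomain e y := by
  ext b
  by_cases hb : b ∈ Set.range e
  · obtain ⟨a, rfl⟩ := hb
    simp [embDomain_coeff]
  · simp [embDomain_of_notMem_range hb]

theorem embDomain_strictMono {A B k : Type*} [LinearOrder A] [LinearOrder B] [Field k]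
    [LinearOrder k] [IsStrictOrderedRing k] (e : A ↪o B) :
    StrictMono (embDomain e : HahnSeries A k → HahnSeries B k) := by
  intro x y hxy
  rw [hahn_lt_iff, ← embDomain_sub, leadingCoeff_embDomain]
  exact hxy

end HahnSeries

section Sharp

variable {k : Type*} [Field k] [LinearOrder k] [IsStrictOrderedRing k]
  {G₁ G₂ : Type*} [CommGroup G₁] [LinearOrder G₁] [IsOrderedMonoid G₁]
  [CommGroup G₂] [LinearOrder G₂] [IsOrderedMonoid G₂]

theorem extMap_mem_largeSeries {ψ : G₁ → G₂} (hψ : StrictMono ψ) (hψ₁ : ψ 1 = 1)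
    {f : HahnSeries (gdual G₁) k} (hf : f ∈ largeSeries k G₁) :
    extMap ψ f ∈ largeSeries k G₂ := by
  intro γ hγ
  rw [extMap, dif_pos hψ] at hγ
  obtain ⟨a, ha, rfl⟩ := support_embDomain_subset hγ
  show 1 < ψ (toG a)
  exact hψ₁ ▸ hψ (hf a ha)

theorem psiSharp_ofAdd {ψ : G₁ → G₂}
    (hψ : ∀ f ∈ largeSeries k G₁, extMap ψ f ∈ largeSeries k G₂) (f : largeSeries k G₁) :
    psiSharp ψ (Multiplicative.ofAdd f) =
      Multiplicative.ofAdd (⟨extMap ψ f, hψ f f.2⟩ : largeSeries k G₂) := by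
  rw [psiSharp, dif_pos hψ]
  rfl

end Sharp

section SigmaAuto

variable {k : Type*} [Field k] [LinearOrder k] [IsStrictOrderedRing k]
  {Γ : Type*} [LinearOrder Γ] {σ : Γ → Γ}

theorem sigmaAuto_strictMono (hσ : StrictMono σ) : StrictMono (sigmaAuto k σ) := by
  rw [sigmaAuto, dif_pos hσ]
  exact fun x y hxy => embDomain_strictMono (k := k) _ hxy

theorem sigmaAuto_one (hσ : StrictMono σ) : sigmaAuto k σ 1 = 1 := by
  rw [sigmaAuto, dif_pos hσ]
  exact congrArg Multiplicative.ofAdd embDomain_zero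

theorem sigmaAuto_xMon (hσ : StrictMono σ) (γ : Γ) : sigmaAuto k σ (xMon k γ) = xMon k (σ γ) := by
  rw [sigmaAuto, dif_pos hσ]
  exact congrArg Multiplicative.ofAdd embDomain_single

theorem extMap_sigmaAuto_sigmaSection_id (hσ : StrictMono σ) (g : HahnGroup Γ k) :
    extMap (sigmaAuto k σ) (sigmaSection k id g) = sigmaSection k σ g := by
  rw [extMap, dif_pos (sigmaAuto_strictMono hσ), sigmaSection, dif_pos strictMono_id,
    sigmaSection, dif_pos hσ, embDomain_embDomain]
  congr 1
  refine RelEmbedding.ext fun γ => ?_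
  show toGd (sigmaAuto k σ (xMon k (OrderDual.ofDual γ))) = toGd (xMon k (σ (OrderDual.ofDual γ)))
  rw [sigmaAuto_xMon hσ]

end SigmaAuto

theorem iota_in_image_of_psiSharp_general {k : Type*} [Field k] [LinearOrder k] [IsStrictOrderedRing k]
    {Γ : Type*} [LinearOrder Γ] (σ : Γ → Γ)
    (hmono : StrictMono σ)
    (hlarge : ∀ g : HahnGroup Γ k, sigmaSection k σ g ∈ largeSeries k (HahnGroup Γ k))
    (hbasic : ∀ g : HahnGroup Γ k,
      sigmaSection k (id : Γ → Γ) g ∈ largeSeries k (HahnGroup Γ k)) :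
    (∀ g : HahnGroup Γ k,
      psiSharp (sigmaAuto k σ)
        (Multiplicative.ofAdd
          (⟨sigmaSection k (id : Γ → Γ) g, hbasic g⟩ :
            ↥(largeSeries k (HahnGroup Γ k)))) =
      iotaSharp (sigmaSection k σ) hlarge g) ∧
    (∀ g : HahnGroup Γ k, ∃ x : Gsharp k (HahnGroup Γ k),
      psiSharp (sigmaAuto k σ) x = iotaSharp (sigmaSection k σ) hlarge g) := by
  have hψ : ∀ f ∈ largeSeries k (HahnGroup Γ k),
      extMap (sigmaAuto k σ) f ∈ largeSeries k (HahnGroup Γ k) := fun _ hf =>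
    extMap_mem_largeSeries (sigmaAuto_strictMono hmono) (sigmaAuto_one hmono) hf
  have hpreimage : ∀ g : HahnGroup Γ k,
      psiSharp (sigmaAuto k σ)
        (Multiplicative.ofAdd
          (⟨sigmaSection k (id : Γ → Γ) g, hbasic g⟩ : ↥(largeSeries k (HahnGroup Γ k)))) =
      iotaSharp (sigmaSection k σ) hlarge g := fun g => by
    rw [psiSharp_ofAdd hψ, iotaSharp]
    exact congrArg Multiplicative.ofAdd (Subtype.ext (extMap_sigmaAuto_sigmaSection_id hmono g))
  exact ⟨hpreimage, fun g => ⟨_, hpreimage g⟩⟩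

/-- Let `G := Γ^k` be the Hahn group, `σ : Γ → Γ` a decreasing
order-preserving embedding, `l_σ = sigmaSection k σ` the induced prelogarithmic section,
`ψ_σ = sigmaAuto k σ` the induced morphism, and `G^#` the exponential extension group of
`(k((G)), l_σ)` with embedding `ι` and `ψ_σ^# = psiSharp (sigmaAuto k σ)`,
`ψ_σ^#(e(α)) := e(ψ_σ(α))`.  Then for every `g ∈ G` there exists `g^# ∈ G^#` with
`ψ_σ^#(g^#) = ι(g)`; namely `g^# = e(Σ_γ (g γ)·x_γ)` (where `Σ_γ (g γ)·x_γ` is the basic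
section `sigmaSection k id` applied to `g`).  In particular `ι(G) ⊆ ψ_σ^#(G^#)`.
(The hypotheses `hbasic` and `hlarge` record the true facts that these sections take
values in `k((G^{>1}))`.) -/
theorem iota_in_image_of_psiSharp {k : Type*} [Field k] [LinearOrder k] [IsStrictOrderedRing k]
    {Γ : Type*} [LinearOrder Γ] (σ : Γ → Γ)
    (hmono : StrictMono σ) (hdec : ∀ γ : Γ, σ γ < γ)
    (hlarge : ∀ g : HahnGroup Γ k, sigmaSection k σ g ∈ largeSeries k (HahnGroup Γ k))
    (hbasic : ∀ g : HahnGroup Γ k,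
      sigmaSection k (id : Γ → Γ) g ∈ largeSeries k (HahnGroup Γ k)) :
    (∀ g : HahnGroup Γ k,
      psiSharp (sigmaAuto k σ)
        (Multiplicative.ofAdd
          (⟨sigmaSection k (id : Γ → Γ) g, hbasic g⟩ :
            ↥(largeSeries k (HahnGroup Γ k)))) =
      iotaSharp (sigmaSection k σ) hlarge g) ∧
    (∀ g : HahnGroup Γ k, ∃ x : Gsharp k (HahnGroup Γ k),
      psiSharp (sigmaAuto k σ) x = iotaSharp (sigmaSection k σ) hlarge g) :=
  iota_in_image_of_psiSharp_general σ hmono hlarge hbasic
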